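/- Let μ, ν be σ-finite measures with h = dν/dμ. For measurable f, g with ∫ log(1+h|f|) dμ < ∞ and ∫ log(1+h|g|) dμ < ∞, one has ∫ log(1+h|f+g|) dμ ≤ ∫ log(1+h|f|) dμ + ∫ log(1+h|g|) dμ. -/
import Mathlib


open MeasureTheory

theorem internal_llog_triangle {Ω : Type*} [MeasurableSpace Ω] (μ ν : Measure Ω)
    [SigmaFinite μ] [SigmaFinite ν] (hac : ν ≪ μ)
    (h : Ω → ℝ) (hh : h =ᵐ[μ] fun x => (ν.rnDeriv μ x).toReal)
    (f g : Ω → ℂ) (hf : Measurable f) (hg : Measurable g)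
    (hfi : ∫⁻ x, ENNReal.ofReal (Real.log (1 + h x * ‖f x‖)) ∂μ < ⊤)
    (hgi : ∫⁻ x, ENNReal.ofReal (Real.log (1 + h x * ‖g x‖)) ∂μ < ⊤) :
    ∫⁻ x, ENNReal.ofReal (Real.log (1 + h x * ‖f x + g x‖)) ∂μ ≤
      ∫⁻ x, ENNReal.ofReal (Real.log (1 + h x * ‖f x‖)) ∂μ
        + ∫⁻ x, ENNReal.ofReal (Real.log (1 + h x * ‖g x‖)) ∂μ := by
  have hmono : ∫⁻ x, ENNReal.ofReal (Real.log (1 + h x * ‖f x + g x‖)) ∂μ ≤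
      ∫⁻ x, (ENNReal.ofReal (Real.log (1 + h x * ‖f x‖))
        + ENNReal.ofReal (Real.log (1 + h x * ‖g x‖))) ∂μ := by
    refine lintegral_mono_ae ?_
    filter_upwards [hh] with x hx
    have ha : 0 ≤ h x := by rw [hx]; exact ENNReal.toReal_nonneg
    have h1 : (0:ℝ) < 1 + h x * ‖f x‖ := by positivity
    have h2 : (0:ℝ) < 1 + h x * ‖g x‖ := by positivity
    have h3 : (0:ℝ) < 1 + h x * ‖f x + g x‖ := by positivity
    have key : Real.log (1 + h x * ‖f x + g x‖) ≤
        Real.log (1 + h x * ‖f x‖) + Real.log (1 + h x * ‖g x‖) := by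
      rw [← Real.log_mul h1.ne' h2.ne']
      apply Real.log_le_log h3
      have hn : ‖f x + g x‖ ≤ ‖f x‖ + ‖g x‖ := norm_add_le _ _
      nlinarith [mul_nonneg ha (norm_nonneg (f x)), mul_nonneg ha (norm_nonneg (g x)),
        mul_nonneg (mul_nonneg ha (norm_nonneg (f x))) (mul_nonneg ha (norm_nonneg (g x))),
        mul_le_mul_of_nonneg_left hn ha]
    calc ENNReal.ofReal (Real.log (1 + h x * ‖f x + g x‖))
        ≤ ENNReal.ofReal (Real.log (1 + h x * ‖f x‖) + Real.log (1 + h x * ‖g x‖)) :=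
          ENNReal.ofReal_le_ofReal key
      _ = ENNReal.ofReal (Real.log (1 + h x * ‖f x‖))
          + ENNReal.ofReal (Real.log (1 + h x * ‖g x‖)) := by
          rw [ENNReal.ofReal_add (Real.log_nonneg (by nlinarith [mul_nonneg ha (norm_nonneg (f x))]))
            (Real.log_nonneg (by nlinarith [mul_nonneg ha (norm_nonneg (g x))]))]
  have hmeas : AEMeasurable (fun x => ENNReal.ofReal (Real.log (1 + h x * ‖f x‖))) μ := by
    refine ⟨fun x => ENNReal.ofReal (Real.log (1 + (ν.rnDeriv μ x).toReal * ‖f x‖)), ?_, ?_⟩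
    · exact ((measurable_const.add ((ν.measurable_rnDeriv μ).ennreal_toReal.mul
        hf.norm)).log).ennreal_ofReal
    · filter_upwards [hh] with x hx; rw [hx]
  rw [lintegral_add_left' hmeas] at hmono
  exact hmono
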